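/- Let d and k be integers with 1 ≤ k < d, and let t₁, …, t_{2k+2} ∈ ℤ^d be an O_k-configuration that is not ℓ1-isometric to O_k. Then the vertex set V = {t₁, …, t_{2k+2}} can be partitioned into nonempty subsets V₁ and V₂ with 1 ≤ |V₁| ≤ k+1 such that ‖s − t‖₁ ≥ 3 for every s ∈ V₁ and every t ∈ V₂. -/

import Mathlib

/-- The `ℓ∞` distance between two points of `ℤ^d`, as a natural number. -/
def linfDist {d : ℕ} (x y : Fin d → ℤ) : ℕ :=
  Finset.univ.sup fun i => (x i - y i).natAbs

/-- The `ℓ1` distance between two points of `ℤ^d`, as a natural number. -/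
def l1Dist {d : ℕ} (x y : Fin d → ℤ) : ℕ :=
  ∑ i, (x i - y i).natAbs

/-- A family of `2k+2` distinct points of `ℤ^d` is an `O_k`-configuration if, in the graph on the
indices with an edge exactly when the `ℓ∞` distance is `1`, every index is adjacent to all others
except exactly one. -/
def IsOkConfig (d k : ℕ) (t : Fin (2 * k + 2) → Fin d → ℤ) : Prop :=
  Function.Injective t ∧
    ∀ i : Fin (2 * k + 2), ∃! i' : Fin (2 * k + 2), i' ≠ i ∧ linfDist (t i) (t i') ≠ 1

/-! Write `σ` for the antipodal involution. Non-antipodal points differ by at most `1` in every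
coordinate, so antipodal ones differ by at most `2`, and by at least `2` on a nonempty set `S i` of
"spread" coordinates, at which every other point is the midpoint of `t i` and `t (σ i)`. Hence
spread sets of distinct pairs are disjoint and, for `a ≠ b`, `‖t a - t b‖₁` is at least
`|S a| + |S b|` plus the number of remaining coordinates where they differ; so `‖t a - t b‖₁ ≤ 2`
exactly when both spread sets are singletons and the points agree off all spread coordinates.
Thus `ℓ1` distance `≤ 2` is an equivalence relation on the configuration, distinct classes are at
distance `≥ 3`, non-isometry (all distances being `≥ 2`) gives two classes, and a class or its
complement has at most `k + 1` points. -/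

open Finset

theorem Finset.exists_split_of_not_rel {α : Type*} [DecidableEq α] (S : Finset α)
    (r : α → α → Prop) (hrefl : ∀ x ∈ S, r x x) (hsymm : ∀ x ∈ S, ∀ y ∈ S, r x y → r y x)
    (htrans : ∀ x ∈ S, ∀ y ∈ S, ∀ z ∈ S, r x y → r y z → r x z)
    {x₀ y₀ : α} (hx₀ : x₀ ∈ S) (hy₀ : y₀ ∈ S) (hxy : ¬ r x₀ y₀) :
    ∃ V₁ V₂ : Finset α, V₁ ∪ V₂ = S ∧ Disjoint V₁ V₂ ∧ V₁.Nonempty ∧ V₂.Nonempty ∧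
      2 * #V₁ ≤ #S ∧ ∀ s ∈ V₁, ∀ t ∈ V₂, ¬ r s t := by
  classical
  set A := S.filter (r x₀)
  set B := S.filter fun y => ¬ r x₀ y
  have hA : x₀ ∈ A := mem_filter.2 ⟨hx₀, hrefl x₀ hx₀⟩
  have hB : y₀ ∈ B := mem_filter.2 ⟨hy₀, hxy⟩
  have hcard : #A + #B = #S := card_filter_add_card_filter_not _
  have hAB : ∀ s ∈ A, ∀ t ∈ B, ¬ r s t := by
    intro s hs t ht hst
    simp only [A, B, mem_filter] at hs ht
    exact ht.2 (htrans x₀ hx₀ s hs.1 t ht.1 hs.2 hst)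
  by_cases hsmall : 2 * #A ≤ #S
  · exact ⟨A, B, filter_union_filter_not_eq _ _, disjoint_filter_filter_not _ _ _, ⟨x₀, hA⟩,
      ⟨y₀, hB⟩, hsmall, hAB⟩
  · refine ⟨B, A, by rw [union_comm]; exact filter_union_filter_not_eq _ _,
      disjoint_filter_filter_not _ _ _ |>.symm, ⟨y₀, hB⟩, ⟨x₀, hA⟩, by omega, ?_⟩
    intro s hs t ht hst
    exact hAB t ht s hs (hsymm s (mem_filter.1 hs).1 t (mem_filter.1 ht).1 hst)

section Distances

variable {d : ℕ}

lemma l1Dist_comm (x y : Fin d → ℤ) : l1Dist x y = l1Dist y x :=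
  sum_congr rfl fun _ _ => by omega

lemma l1Dist_self (x : Fin d → ℤ) : l1Dist x x = 0 := by
  simp [l1Dist]

lemma linfDist_comm (x y : Fin d → ℤ) : linfDist x y = linfDist y x :=
  sup_congr rfl fun _ _ => by omega

lemma natAbs_sub_le_linfDist (x y : Fin d → ℤ) (c : Fin d) :
    (x c - y c).natAbs ≤ linfDist x y :=
  le_sup (f := fun i => (x i - y i).natAbs) (mem_univ c)

lemma exists_two_le_natAbs_sub {x y : Fin d → ℤ} (hxy : x ≠ y) (h : linfDist x y ≠ 1) :
    ∃ c, 2 ≤ (x c - y c).natAbs := by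
  by_contra! hlt
  have hle : linfDist x y ≤ 1 := Finset.sup_le fun c _ => by have := hlt c; omega
  refine hxy (funext fun c => ?_)
  have := natAbs_sub_le_linfDist x y c
  omega

end Distances

namespace IsOkConfig

variable {d k : ℕ} {t : Fin (2 * k + 2) → Fin d → ℤ} (ht : IsOkConfig d k t)
  {i j a b : Fin (2 * k + 2)}

/-- The vertex opposite to `i` in `O_k`. -/
noncomputable def antipode (i : Fin (2 * k + 2)) : Fin (2 * k + 2) :=
  (ht.2 i).exists.choose

lemma antipode_ne (i : Fin (2 * k + 2)) : ht.antipode i ≠ i :=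
  (ht.2 i).exists.choose_spec.1

lemma linfDist_antipode_ne_one (i : Fin (2 * k + 2)) :
    linfDist (t i) (t (ht.antipode i)) ≠ 1 :=
  (ht.2 i).exists.choose_spec.2

lemma eq_antipode_of_linfDist_ne_one (hj : j ≠ i) (h : linfDist (t i) (t j) ≠ 1) :
    j = ht.antipode i :=
  (ht.2 i).unique ⟨hj, h⟩ (ht.2 i).exists.choose_spec

lemma antipode_involutive : Function.Involutive ht.antipode := fun i =>
  (ht.eq_antipode_of_linfDist_ne_one (ht.antipode_ne i).symm
    (linfDist_comm (t i) _ ▸ ht.linfDist_antipode_ne_one i)).symm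

lemma natAbs_sub_le_one (hj : j ≠ i) (hj' : j ≠ ht.antipode i) (c : Fin d) :
    (t i c - t j c).natAbs ≤ 1 := by
  have hadj : linfDist (t i) (t j) = 1 := by
    by_contra h
    exact hj' (ht.eq_antipode_of_linfDist_ne_one hj h)
  exact hadj ▸ natAbs_sub_le_linfDist _ _ c

lemma natAbs_sub_antipode_le_two (hk : 1 ≤ k) (i : Fin (2 * k + 2)) (c : Fin d) :
    (t i c - t (ht.antipode i) c).natAbs ≤ 2 := by
  obtain ⟨z, hzi, hzσ⟩ := ENat.exists_ne_ne_of_three_le (α := Fin (2 * k + 2))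
    (by simp only [ENat.card_eq_coe_fintype_card, Fintype.card_fin]; norm_cast; omega)
    i (ht.antipode i)
  have h₁ := ht.natAbs_sub_le_one hzi hzσ c
  have h₂ := ht.natAbs_sub_le_one hzσ (by rwa [ht.antipode_involutive]) c
  omega

noncomputable def spread (i : Fin (2 * k + 2)) : Finset (Fin d) :=
  univ.filter fun c => 2 ≤ (t i c - t (ht.antipode i) c).natAbs

lemma mem_spread {c : Fin d} : c ∈ ht.spread i ↔ 2 ≤ (t i c - t (ht.antipode i) c).natAbs := by
  simp [spread]

lemma spread_nonempty (i : Fin (2 * k + 2)) : (ht.spread i).Nonempty := by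
  obtain ⟨c, hc⟩ := exists_two_le_natAbs_sub
    (fun h => ht.antipode_ne i (ht.1 h).symm) (ht.linfDist_antipode_ne_one i)
  exact ⟨c, ht.mem_spread.2 hc⟩

lemma spread_antipode (i : Fin (2 * k + 2)) : ht.spread (ht.antipode i) = ht.spread i := by
  ext c
  rw [mem_spread, mem_spread, ht.antipode_involutive i]
  omega

lemma two_mul_eq_add_of_mem_spread {c : Fin d} {z : Fin (2 * k + 2)} (hc : c ∈ ht.spread i)
    (hz : z ≠ i) (hz' : z ≠ ht.antipode i) : 2 * t z c = t i c + t (ht.antipode i) c := by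
  have h₁ := ht.natAbs_sub_le_one hz hz' c
  have h₂ := ht.natAbs_sub_le_one hz' (by rwa [ht.antipode_involutive]) c
  have h₃ := ht.mem_spread.1 hc
  omega

lemma natAbs_sub_eq_one_of_mem_spread {c : Fin d} {z : Fin (2 * k + 2)} (hc : c ∈ ht.spread i)
    (hz : z ≠ i) (hz' : z ≠ ht.antipode i) : (t i c - t z c).natAbs = 1 := by
  have h₁ := ht.two_mul_eq_add_of_mem_spread hc hz hz'
  have h₂ := ht.mem_spread.1 hc
  have h₃ := ht.natAbs_sub_le_one hz hz' c
  omega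

lemma disjoint_spread (hj : j ≠ i) (hj' : j ≠ ht.antipode i) :
    Disjoint (ht.spread i) (ht.spread j) := by
  rw [disjoint_left]
  intro c hci hcj
  have hσj : ht.antipode j ≠ i := fun h => hj' (by rw [← h, ht.antipode_involutive])
  have hσj' : ht.antipode j ≠ ht.antipode i := fun h => hj (ht.antipode_involutive.injective h)
  have h₁ := ht.two_mul_eq_add_of_mem_spread hci hj hj'
  have h₂ := ht.two_mul_eq_add_of_mem_spread hci hσj hσj'
  have h₃ := ht.mem_spread.1 hcj
  omega

lemma eq_of_mem_spread {c : Fin d} {p : Fin (2 * k + 2)} (hc : c ∈ ht.spread p)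
    (ha : c ∉ ht.spread a) (hb : c ∉ ht.spread b) : t a c = t b c := by
  have hne : ∀ x, c ∉ ht.spread x → x ≠ p ∧ x ≠ ht.antipode p := fun x hx =>
    ⟨fun h => hx (h ▸ hc), fun h => hx (h ▸ (ht.spread_antipode p).symm ▸ hc)⟩
  have h₁ := ht.two_mul_eq_add_of_mem_spread hc (hne a ha).1 (hne a ha).2
  have h₂ := ht.two_mul_eq_add_of_mem_spread hc (hne b hb).1 (hne b hb).2
  omega

lemma card_spread_add_card_spread_le_sum (hab : a ≠ b) :
    #(ht.spread a) + #(ht.spread b) ≤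
      ∑ c ∈ ht.spread a ∪ ht.spread b, (t a c - t b c).natAbs := by
  by_cases hb : b = ht.antipode a
  · subst hb
    rw [ht.spread_antipode, union_self, ← two_mul, mul_comm, ← smul_eq_mul]
    exact card_nsmul_le_sum _ _ _ fun c hc => ht.mem_spread.1 hc
  · rw [sum_union (ht.disjoint_spread hab.symm hb)]
    have hba : a ≠ ht.antipode b := fun h => hb (by rw [h, ht.antipode_involutive])
    refine add_le_add ?_ ?_ <;> rw [card_eq_sum_ones] <;> refine sum_le_sum fun c hc => ?_
    · exact (ht.natAbs_sub_eq_one_of_mem_spread hc hab.symm hb).ge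
    · exact (ht.natAbs_sub_eq_one_of_mem_spread hc hab hba).ge.trans_eq (by omega)

lemma card_spread_add_le_l1Dist (hab : a ≠ b) :
    #(ht.spread a) + #(ht.spread b) +
        ∑ c ∈ (ht.spread a ∪ ht.spread b)ᶜ, (t a c - t b c).natAbs ≤ l1Dist (t a) (t b) := by
  rw [l1Dist, ← sum_add_sum_compl (ht.spread a ∪ ht.spread b)]
  exact Nat.add_le_add_right (ht.card_spread_add_card_spread_le_sum hab) _

lemma two_le_l1Dist (ht : IsOkConfig d k t) (hab : a ≠ b) : 2 ≤ l1Dist (t a) (t b) := by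
  have := ht.card_spread_add_le_l1Dist hab
  have := (ht.spread_nonempty a).card_pos
  have := (ht.spread_nonempty b).card_pos
  omega

lemma l1Dist_le_two_iff (hk : 1 ≤ k) (hab : a ≠ b) :
    l1Dist (t a) (t b) ≤ 2 ↔ #(ht.spread a) = 1 ∧ #(ht.spread b) = 1 ∧
      ∀ c, (∀ p, c ∉ ht.spread p) → t a c = t b c := by
  constructor
  · intro h
    have hle := ht.card_spread_add_le_l1Dist hab
    have := (ht.spread_nonempty a).card_pos
    have := (ht.spread_nonempty b).card_pos
    have hzero : ∑ c ∈ (ht.spread a ∪ ht.spread b)ᶜ, (t a c - t b c).natAbs = 0 := by omega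
    refine ⟨by omega, by omega, fun c hc => ?_⟩
    have := (sum_eq_zero_iff.1 hzero) c (by simp [hc a, hc b])
    omega
  · rintro ⟨ha, hb, hoff⟩
    have hsum : l1Dist (t a) (t b) = ∑ c ∈ ht.spread a ∪ ht.spread b, (t a c - t b c).natAbs := by
      refine (sum_subset (subset_univ _) fun c _ hc => ?_).symm
      rw [mem_union, not_or] at hc
      by_cases hspec : ∃ p, c ∈ ht.spread p
      · obtain ⟨p, hp⟩ := hspec
        rw [ht.eq_of_mem_spread hp hc.1 hc.2, sub_self, Int.natAbs_zero]
      · push Not at hspec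
        rw [hoff c hspec, sub_self, Int.natAbs_zero]
    rw [hsum]
    by_cases hba : b = ht.antipode a
    · subst hba
      obtain ⟨s, hs⟩ := card_eq_one.1 ha
      rw [ht.spread_antipode, union_self, hs, sum_singleton]
      exact ht.natAbs_sub_antipode_le_two hk a s
    · calc ∑ c ∈ ht.spread a ∪ ht.spread b, (t a c - t b c).natAbs
          ≤ #(ht.spread a ∪ ht.spread b) • 1 :=
            sum_le_card_nsmul _ _ _ fun c _ => ht.natAbs_sub_le_one hab.symm hba c
        _ ≤ 2 := by
            have := card_union_le (ht.spread a) (ht.spread b)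
            rw [smul_eq_mul, mul_one]
            omega

lemma l1Dist_le_two_trans (ht : IsOkConfig d k t) (hk : 1 ≤ k) {a b c : Fin (2 * k + 2)}
    (hab : l1Dist (t a) (t b) ≤ 2) (hbc : l1Dist (t b) (t c) ≤ 2) : l1Dist (t a) (t c) ≤ 2 := by
  rcases eq_or_ne a b with rfl | hab'
  · exact hbc
  rcases eq_or_ne b c with rfl | hbc'
  · exact hab
  rcases eq_or_ne a c with rfl | hac'
  · simp [l1Dist_self]
  obtain ⟨ha, -, h₁⟩ := (ht.l1Dist_le_two_iff hk hab').1 hab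
  obtain ⟨-, hc, h₂⟩ := (ht.l1Dist_le_two_iff hk hbc').1 hbc
  exact (ht.l1Dist_le_two_iff hk hac').2 ⟨ha, hc, fun x hx => (h₁ x hx).trans (h₂ x hx)⟩

end IsOkConfig

theorem okConfig_not_isometric_partition_general (d k : ℕ) (hk : 1 ≤ k)
    (ts : Fin (2 * k + 2) → Fin d → ℤ) (ht : IsOkConfig d k ts)
    (hnotiso : ¬ ∀ i j : Fin (2 * k + 2), i ≠ j → l1Dist (ts i) (ts j) = 2) :
    ∃ V₁ V₂ : Finset (Fin d → ℤ),
      V₁ ∪ V₂ = Finset.image ts Finset.univ ∧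
      Disjoint V₁ V₂ ∧
      V₁.Nonempty ∧ V₂.Nonempty ∧
      V₁.card ≤ k + 1 ∧
      ∀ s ∈ V₁, ∀ t ∈ V₂, 3 ≤ l1Dist s t := by
  push Not at hnotiso
  obtain ⟨i₀, j₀, hij, hne⟩ := hnotiso
  obtain ⟨V₁, V₂, hunion, hdisj, hV₁, hV₂, hcard, hfar⟩ :=
    (univ.image ts).exists_split_of_not_rel (fun x y => l1Dist x y ≤ 2)
      (by simp [l1Dist_self])
      (by simp only [forall_mem_image]; exact fun i _ j _ h => l1Dist_comm (ts j) _ ▸ h)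
      (by simp only [forall_mem_image]; exact fun i _ j _ l _ => ht.l1Dist_le_two_trans hk)
      (mem_image_of_mem ts (mem_univ i₀)) (mem_image_of_mem ts (mem_univ j₀))
      (by have := ht.two_le_l1Dist hij; omega)
  rw [card_image_of_injective _ ht.1, card_univ, Fintype.card_fin] at hcard
  exact ⟨V₁, V₂, hunion, hdisj, hV₁, hV₂, by omega, fun s hs t htV => by
    have := hfar s hs t htV; omega⟩

/-- For `1 ≤ k < d`, if an `O_k`-configuration is not `ℓ1`-isometric to `O_k`,
then its vertex set can be partitioned into nonempty subsets `V₁`, `V₂` with `|V₁| ≤ k + 1` such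
that every point of `V₁` is at `ℓ1` distance at least `3` from every point of `V₂`. -/
theorem okConfig_not_isometric_partition (d k : ℕ) (hk : 1 ≤ k) (hkd : k < d)
    (ts : Fin (2 * k + 2) → Fin d → ℤ) (ht : IsOkConfig d k ts)
    (hnotiso : ¬ ∀ i j : Fin (2 * k + 2), i ≠ j → l1Dist (ts i) (ts j) = 2) :
    ∃ V₁ V₂ : Finset (Fin d → ℤ),
      V₁ ∪ V₂ = Finset.image ts Finset.univ ∧
      Disjoint V₁ V₂ ∧
      V₁.Nonempty ∧ V₂.Nonempty ∧
      V₁.card ≤ k + 1 ∧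
      ∀ s ∈ V₁, ∀ t ∈ V₂, 3 ≤ l1Dist s t :=
  okConfig_not_isometric_partition_general d k hk ts ht hnotiso
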